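/- arXiv:0706.4053 — 2 statements merged into one kernel-verified Lean document; each statement's English description precedes it below -/
import Mathlib

section
/- Let G be the group of bijections of ℝ³ generated by τ₀(x⁰,x¹,x²) = (x⁰−1, x¹, x²), τ₁(x⁰,x¹,x²) = (x⁰, x¹−1, x²), τ₂(x⁰,x¹,x²) = (x⁰, x¹ + n₀x⁰, x²−1). Then the abelianization of G has a subgroup isomorphic to ℤ ⊕ ℤ; equivalently the rank of G/[G,G] is at least 2. -/
/-- The translation `(x⁰, x¹, x²) ↦ (x⁰ − 1, x¹, x²)`. -/
def tau0 : Equiv.Perm (ℝ × ℝ × ℝ) where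
  toFun x := (x.1 - 1, x.2.1, x.2.2)
  invFun x := (x.1 + 1, x.2.1, x.2.2)
  left_inv x := by simp
  right_inv x := by simp

/-- The translation `(x⁰, x¹, x²) ↦ (x⁰, x¹ − 1, x²)`. -/
def tau1 : Equiv.Perm (ℝ × ℝ × ℝ) where
  toFun x := (x.1, x.2.1 - 1, x.2.2)
  invFun x := (x.1, x.2.1 + 1, x.2.2)
  left_inv x := by simp
  right_inv x := by simp

/-- The affine map `(x⁰, x¹, x²) ↦ (x⁰, x¹ + n₀ x⁰, x² − 1)`. -/
def tau2 (n₀ : ℤ) : Equiv.Perm (ℝ × ℝ × ℝ) where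
  toFun x := (x.1, x.2.1 + (n₀ : ℝ) * x.1, x.2.2 - 1)
  invFun x := (x.1, x.2.1 - (n₀ : ℝ) * x.1, x.2.2 + 1)
  left_inv x := by simp
  right_inv x := by simp


/-! Every generator, hence every element of `G`, moves the outer coordinates `(x⁰, x²)` by a
translation, and the translation vector is a homomorphism `G → ℝ²`. It factors through the
abelianization and sends `τ₀, τ₂` to `(-1, 0), (0, -1)`, which are independent over `ℤ`; so
`(m, n) ↦ [τ₀]^m [τ₂]^n` is injective. -/

section TranslationLift

variable {X V : Type*} [AddCommGroup V] (π : X → V)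

def translationLifts : Subgroup (Equiv.Perm X) where
  carrier := {g | ∃ v : V, ∀ x, π (g x) = π x + v}
  one_mem' := ⟨0, by simp⟩
  mul_mem' := by
    rintro g h ⟨v, hv⟩ ⟨w, hw⟩
    exact ⟨w + v, fun x => by rw [Equiv.Perm.mul_apply, hv, hw, add_assoc]⟩
  inv_mem' := by
    rintro g ⟨v, hv⟩
    exact ⟨-v, fun x => by rw [eq_add_neg_iff_add_eq, ← hv]; simp⟩

def translationPart (x₀ : X) : translationLifts π →* Multiplicative V where
  toFun g := .ofAdd (π (g.1 x₀) - π x₀)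
  map_one' := by simp
  map_mul' := by
    rintro ⟨g, v, hv⟩ ⟨h, w, hw⟩
    change Multiplicative.ofAdd (π (g (h x₀)) - π x₀) =
      .ofAdd (π (g x₀) - π x₀) * .ofAdd (π (h x₀) - π x₀)
    rw [hv, hv, hw, ← ofAdd_add]
    abel_nf

theorem translationPart_apply {x₀ : X} {g : Equiv.Perm X} {v : V} (hv : ∀ x, π (g x) = π x + v) :
    translationPart π x₀ ⟨g, v, hv⟩ = .ofAdd v := by
  simp [translationPart, hv]

end TranslationLift

def zpowersPairHom {H : Type*} [CommGroup H] (a b : H) : Multiplicative (ℤ × ℤ) →* H :=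
  (MonoidHom.coprod (zpowersHom H a) (zpowersHom H b)).comp
    (MulEquiv.prodMultiplicative (G := ℤ) (H := ℤ)).toMonoidHom

theorem zpowersPairHom_apply {H : Type*} [CommGroup H] (a b : H) (p : Multiplicative (ℤ × ℤ)) :
    zpowersPairHom a b p = a ^ p.toAdd.1 * b ^ p.toAdd.2 := by
  simp [zpowersPairHom]

theorem zpowersPairHom_injective_of_map {H K : Type*} [CommGroup H] [CommGroup K] (Ψ : H →* K)
    {a b : H} (h : Function.Injective (zpowersPairHom (Ψ a) (Ψ b))) :
    Function.Injective (zpowersPairHom a b) := by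
  refine Function.Injective.of_comp (f := Ψ) ?_
  convert h using 1
  ext p
  simp [zpowersPairHom_apply]

theorem zpowersPairHom_neg_unit_injective :
    Function.Injective (zpowersPairHom (Multiplicative.ofAdd ((-1 : ℝ), (0 : ℝ)))
      (Multiplicative.ofAdd ((0 : ℝ), (-1 : ℝ)))) := by
  intro p q h
  simp only [zpowersPairHom_apply, ← ofAdd_zsmul, Prod.smul_mk, smul_neg, zsmul_eq_mul, mul_one,
    smul_zero, ← ofAdd_add, Prod.mk_add_mk, add_zero, zero_add, EmbeddingLike.apply_eq_iff_eq,
    Prod.mk.injEq, neg_inj, Int.cast_inj] at h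
  exact Multiplicative.toAdd.injective (Prod.ext h.1 h.2)

def outerCoords (x : ℝ × ℝ × ℝ) : ℝ × ℝ := (x.1, x.2.2)

theorem outerCoords_tau0 (x : ℝ × ℝ × ℝ) : outerCoords (tau0 x) = outerCoords x + (-1, 0) := by
  simp [outerCoords, tau0, sub_eq_add_neg]

theorem outerCoords_tau1 (x : ℝ × ℝ × ℝ) : outerCoords (tau1 x) = outerCoords x + 0 := by
  simp [outerCoords, tau1]

theorem outerCoords_tau2 (n₀ : ℤ) (x : ℝ × ℝ × ℝ) :
    outerCoords (tau2 n₀ x) = outerCoords x + (0, -1) := by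
  simp [outerCoords, tau2, sub_eq_add_neg]

theorem closure_le_translationLifts (n₀ : ℤ) :
    Subgroup.closure {tau0, tau1, tau2 n₀} ≤ translationLifts outerCoords := by
  rw [Subgroup.closure_le]
  rintro g (rfl | rfl | rfl)
  exacts [⟨_, outerCoords_tau0⟩, ⟨_, outerCoords_tau1⟩, ⟨_, outerCoords_tau2 n₀⟩]

theorem abelianization_contains_Z2 (n₀ : ℤ) :
    ∃ φ : Multiplicative (ℤ × ℤ) →*
      Abelianization ↥(Subgroup.closure {tau0, tau1, tau2 n₀} :
        Subgroup (Equiv.Perm (ℝ × ℝ × ℝ))),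
      Function.Injective φ := by
  set G := Subgroup.closure {tau0, tau1, tau2 n₀}
  let Ψ : Abelianization G →* Multiplicative (ℝ × ℝ) := Abelianization.lift
    ((translationPart outerCoords 0).comp (Subgroup.inclusion (closure_le_translationLifts n₀)))
  let a : Abelianization G := .of ⟨tau0, Subgroup.subset_closure (by simp)⟩
  let b : Abelianization G := .of ⟨tau2 n₀, Subgroup.subset_closure (by simp)⟩
  have hΨa : Ψ a = .ofAdd (-1, 0) := translationPart_apply outerCoords outerCoords_tau0
  have hΨb : Ψ b = .ofAdd (0, -1) := translationPart_apply outerCoords (outerCoords_tau2 n₀)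
  refine ⟨zpowersPairHom a b, zpowersPairHom_injective_of_map Ψ ?_⟩
  rw [hΨa, hΨb]
  exact zpowersPairHom_neg_unit_injective
end

section
/- On a compact metric space, every positively expansive homeomorphism exists only if the space is finite; equivalently, if K is an infinite compact metric space then no homeomorphism h : K → K is positively expansive. -/
open Filter Topology Metric

section Aux

variable {K : Type*} [MetricSpace K] [CompactSpace K]

private lemma subseq_lim (u : ℕ → K × K) :
    ∃ a : K × K, ∃ φ : ℕ → ℕ, StrictMono φ ∧ Tendsto (u ∘ φ) atTop (𝓝 a) := by
  obtain ⟨a, -, φ, hφ, ht⟩ := (isCompact_univ : IsCompact (Set.univ : Set (K × K))).tendsto_subseq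
    (fun n => Set.mem_univ (u n))
  exact ⟨a, φ, hφ, ht⟩

omit [MetricSpace K] [CompactSpace K] in
private lemma iter_cancel {f g : K → K} (hfg : Function.LeftInverse f g) :
    ∀ j m (x : K), j ≤ m → f^[j] (g^[m] x) = g^[m - j] x := by
  intro j m x hjm
  have h1 : g^[m] x = g^[j] (g^[m - j] x) := by
    rw [← Function.iterate_add_apply]
    congr 1
    omega
  rw [h1, hfg.iterate j]

/-- Uniform expansiveness. -/
private lemma claimB {f : K → K} (hf : Continuous f) {ε : ℝ}
    (hexp : ∀ x y : K, x ≠ y → ∃ n : ℕ, ε < dist (f^[n] x) (f^[n] y))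
    {γ : ℝ} (hγ : 0 < γ) :
    ∃ N : ℕ, ∀ x y : K, (∀ n ≤ N, dist (f^[n] x) (f^[n] y) ≤ ε) → dist x y ≤ γ := by
  by_contra hc
  push_neg at hc
  choose x y hxy hd using hc
  obtain ⟨a, φ, hφ, ht⟩ := subseq_lim (fun N => (x N, y N))
  have ht1 : Tendsto (fun k => x (φ k)) atTop (𝓝 a.1) := (continuous_fst.tendsto a).comp ht
  have ht2 : Tendsto (fun k => y (φ k)) atTop (𝓝 a.2) := (continuous_snd.tendsto a).comp ht
  have hane : a.1 ≠ a.2 := by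
    have : γ ≤ dist a.1 a.2 := by
      refine ge_of_tendsto (ht1.dist ht2) ?_
      exact Eventually.of_forall fun k => le_of_lt (hd (φ k))
    intro he
    rw [he, dist_self] at this
    linarith
  obtain ⟨n, hn⟩ := hexp a.1 a.2 hane
  have hlim : Tendsto (fun k => dist (f^[n] (x (φ k))) (f^[n] (y (φ k)))) atTop
      (𝓝 (dist (f^[n] a.1) (f^[n] a.2))) :=
    (((hf.iterate n).tendsto a.1).comp ht1).dist (((hf.iterate n).tendsto a.2).comp ht2)
  have : dist (f^[n] a.1) (f^[n] a.2) ≤ ε := by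
    refine le_of_tendsto hlim ?_
    filter_upwards [eventually_ge_atTop n] with k hk
    exact hxy (φ k) n (hk.trans (hφ.le_apply))
  linarith

/-- Backward orbits of close points stay ε-close. -/
private lemma claimA {f g : K → K} (hf : Continuous f) (hg : Continuous g)
    (hfg : Function.LeftInverse f g) (hinj : Function.Injective f) {ε : ℝ} (hε : 0 < ε)
    (hexp : ∀ x y : K, x ≠ y → ∃ n : ℕ, ε < dist (f^[n] x) (f^[n] y)) :
    ∃ δ > 0, ∀ x y : K, dist x y ≤ δ → ∀ n : ℕ, dist (g^[n] x) (g^[n] y) ≤ ε := by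
  by_contra hc
  push_neg at hc
  have hc' : ∀ k : ℕ, ∃ x y : K, dist x y ≤ 1 / (k + 1) ∧
      ∃ n, ε < dist (g^[n] x) (g^[n] y) := by
    intro k
    obtain ⟨x, y, hxy, n, hn⟩ := hc (1 / (k + 1)) (by positivity)
    exact ⟨x, y, hxy, n, hn⟩
  choose x y hxy hex using hc'
  set n : ℕ → ℕ := fun k => Nat.find (hex k) with hn_def
  have hn1 : ∀ k, ε < dist (g^[n k] (x k)) (g^[n k] (y k)) := fun k => Nat.find_spec (hex k)
  have hn2 : ∀ k j, j < n k → dist (g^[j] (x k)) (g^[j] (y k)) ≤ ε := by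
    intro k j hj
    exact not_lt.1 (Nat.find_min (hex k) hj)
  obtain ⟨p, φ, hφ, htp⟩ := subseq_lim (fun k => (x k, y k))
  have ht1 : Tendsto (fun k => x (φ k)) atTop (𝓝 p.1) := (continuous_fst.tendsto p).comp htp
  have ht2 : Tendsto (fun k => y (φ k)) atTop (𝓝 p.2) := (continuous_snd.tendsto p).comp htp
  have hpq : p.1 = p.2 := by
    have h0 : Tendsto (fun k => dist (x (φ k)) (y (φ k))) atTop (𝓝 0) := by
      refine squeeze_zero (fun k => dist_nonneg) (fun k => ?_)
        tendsto_one_div_add_atTop_nhds_zero_nat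
      refine (hxy (φ k)).trans ?_
      have hkk : k ≤ φ k := hφ.le_apply
      have : (k : ℝ) + 1 ≤ (φ k : ℝ) + 1 := by
        have := (Nat.cast_le (α := ℝ)).2 hkk
        linarith
      apply one_div_le_one_div_of_le (by positivity) this
    have h1 : Tendsto (fun k => dist (x (φ k)) (y (φ k))) atTop (𝓝 (dist p.1 p.2)) :=
      ht1.dist ht2
    have := tendsto_nhds_unique h1 h0
    exact dist_eq_zero.1 this
  -- the first separation times tend to infinity
  have hm : ∀ N : ℕ, ∀ᶠ k in atTop, N < n (φ k) := by
    intro N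
    have hj : ∀ j : ℕ, ∀ᶠ k in atTop, dist (g^[j] (x (φ k))) (g^[j] (y (φ k))) ≤ ε := by
      intro j
      have hl : Tendsto (fun k => dist (g^[j] (x (φ k))) (g^[j] (y (φ k)))) atTop
          (𝓝 (dist (g^[j] p.1) (g^[j] p.2))) :=
        (((hg.iterate j).tendsto p.1).comp ht1).dist (((hg.iterate j).tendsto p.2).comp ht2)
      rw [hpq, dist_self] at hl
      have := hl.eventually (eventually_le_nhds hε)
      exact this
    have hall : ∀ᶠ k in atTop, ∀ j ∈ Finset.range (N + 1),
        dist (g^[j] (x (φ k))) (g^[j] (y (φ k))) ≤ ε :=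
      (Filter.eventually_all_finset _).2 fun j _ => hj j
    filter_upwards [hall] with k hk
    by_contra hle
    push_neg at hle
    exact absurd (hk (n (φ k)) (Finset.mem_range.2 (by omega))) (not_le.2 (hn1 (φ k)))
  obtain ⟨q, ψ, hψ, htq⟩ := subseq_lim (fun k => (g^[n (φ k)] (x (φ k)), g^[n (φ k)] (y (φ k))))
  have hq1 : Tendsto (fun k => g^[n (φ (ψ k))] (x (φ (ψ k)))) atTop (𝓝 q.1) :=
    (continuous_fst.tendsto q).comp htq
  have hq2 : Tendsto (fun k => g^[n (φ (ψ k))] (y (φ (ψ k)))) atTop (𝓝 q.2) :=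
    (continuous_snd.tendsto q).comp htq
  have hqd : ε ≤ dist q.1 q.2 := by
    refine ge_of_tendsto (hq1.dist hq2) ?_
    exact Eventually.of_forall fun k => le_of_lt (hn1 (φ (ψ k)))
  have hforward : ∀ j : ℕ, 1 ≤ j → dist (f^[j] q.1) (f^[j] q.2) ≤ ε := by
    intro j hj1
    have hl : Tendsto (fun k => dist (f^[j] (g^[n (φ (ψ k))] (x (φ (ψ k)))))
        (f^[j] (g^[n (φ (ψ k))] (y (φ (ψ k)))))) atTop
        (𝓝 (dist (f^[j] q.1) (f^[j] q.2))) :=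
      (((hf.iterate j).tendsto q.1).comp hq1).dist (((hf.iterate j).tendsto q.2).comp hq2)
    refine le_of_tendsto hl ?_
    filter_upwards [hψ.tendsto_atTop.eventually (hm j)] with k hk
    rw [iter_cancel hfg j _ _ hk.le, iter_cancel hfg j _ _ hk.le]
    exact hn2 (φ (ψ k)) _ (by omega)
  have hne : q.1 ≠ q.2 := fun he => by rw [he, dist_self] at hqd; linarith
  obtain ⟨m, hm'⟩ := hexp (f q.1) (f q.2) (fun he => hne (hinj he))
  rw [← Function.iterate_succ_apply, ← Function.iterate_succ_apply] at hm'
  exact absurd (hforward (m + 1) (by omega)) (not_le.2 hm')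

end Aux

theorem finite_of_positively_expansive {K : Type*} [MetricSpace K] [CompactSpace K]
    (h : K ≃ₜ K)
    (hexp : ∃ ε : ℝ, 0 < ε ∧ ∀ x y : K, x ≠ y →
      ∃ n : ℕ, ε < dist ((⇑h)^[n] x) ((⇑h)^[n] y)) :
    Finite K := by
  classical
  obtain ⟨ε, hε, hexp⟩ := hexp
  by_contra hfin
  have : Infinite K := not_finite_iff_infinite.1 hfin
  set f : K → K := ⇑h with hf_def
  set g : K → K := ⇑h.symm with hg_def
  have hfg : Function.LeftInverse f g := fun x => h.apply_symm_apply x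
  have hgf : Function.LeftInverse g f := fun x => h.symm_apply_apply x
  obtain ⟨δ, hδ, hA⟩ := claimA h.continuous h.symm.continuous hfg h.injective hε hexp
  obtain ⟨t, -, htfin, hcover⟩ :=
    finite_cover_balls_of_compact (isCompact_univ : IsCompact (Set.univ : Set K))
      (half_pos hδ)
  set m : ℕ := htfin.toFinset.card with hm_def
  obtain ⟨S, hS⟩ := Infinite.exists_subset_card_eq K (m + 2)
  -- minimal pairwise distance
  set T : Finset ℝ :=
    ((S ×ˢ S).filter fun p => p.1 ≠ p.2).image fun p => dist p.1 p.2 with hT_def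
  have hSne : ∃ a ∈ S, ∃ b ∈ S, a ≠ b := by
    have h2 : 1 < S.card := by omega
    obtain ⟨a, ha, b, hb, hab⟩ := Finset.one_lt_card.1 h2
    exact ⟨a, ha, b, hb, hab⟩
  have hTne : T.Nonempty := by
    obtain ⟨a, ha, b, hb, hab⟩ := hSne
    exact ⟨dist a b, Finset.mem_image.2 ⟨(a, b), Finset.mem_filter.2
      ⟨Finset.mk_mem_product ha hb, hab⟩, rfl⟩⟩
  set γ : ℝ := T.min' hTne / 2 with hγ_def
  have hTpos : 0 < T.min' hTne := by
    obtain ⟨p, hp, hpe⟩ := Finset.mem_image.1 (T.min'_mem hTne)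
    have hne : p.1 ≠ p.2 := (Finset.mem_filter.1 hp).2
    rw [← hpe]
    exact dist_pos.2 hne
  have hγ : 0 < γ := by positivity
  obtain ⟨N, hB⟩ := claimB h.continuous hexp hγ
  -- choose a ball center for each point
  have hsel : ∀ a : K, ∃ c, c ∈ htfin.toFinset ∧ dist (f^[N] a) c < δ / 2 := by
    intro a
    have := hcover (Set.mem_univ (f^[N] a))
    rw [Set.mem_iUnion₂] at this
    obtain ⟨c, hc, hball⟩ := this
    exact ⟨c, htfin.mem_toFinset.2 hc, mem_ball.1 hball⟩
  choose F hF1 hF2 using hsel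
  have hcard : htfin.toFinset.card < S.card := by omega
  obtain ⟨i, hi, j, hj, hij, hFij⟩ :=
    Finset.exists_ne_map_eq_of_card_lt_of_maps_to hcard fun a _ => hF1 a
  -- the two points are δ-close after N steps
  have hclose : dist (f^[N] i) (f^[N] j) ≤ δ := by
    calc dist (f^[N] i) (f^[N] j) ≤ dist (f^[N] i) (F i) + dist (F j) (f^[N] j) := by
          rw [hFij]; exact dist_triangle _ _ _
      _ ≤ δ / 2 + δ / 2 := by
          have h1 := hF2 i
          have h2 := hF2 j
          rw [dist_comm] at h2
          linarith
      _ = δ := by ring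
  -- hence all forward iterates up to N are ε-close
  have hiter : ∀ n ≤ N, dist (f^[n] i) (f^[n] j) ≤ ε := by
    intro n hn
    have hAi := hA (f^[N] i) (f^[N] j) hclose (N - n)
    have key : ∀ a : K, g^[N - n] (f^[N] a) = f^[n] a := by
      intro a
      have hsplit : f^[N] a = f^[N - n] (f^[n] a) := by
        rw [← Function.iterate_add_apply]
        congr 1
        omega
      rw [hsplit, hgf.iterate (N - n)]
    have e1 := key i
    have e2 := key j
    rwa [e1, e2] at hAi
  have hdij : dist i j ≤ γ := hB i j hiter
  have hmem : dist i j ∈ T := Finset.mem_image.2 ⟨(i, j), Finset.mem_filter.2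
    ⟨Finset.mk_mem_product hi hj, hij⟩, rfl⟩
  have := T.min'_le _ hmem
  rw [hγ_def] at hdij
  linarith
end
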